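/- arXiv:cmp-lg/9611004 — 2 statements merged into one kernel-verified Lean document; each statement's English description precedes it below -/
import Mathlib

section
/- Let A be a finite nonempty alphabet, let δ : A → ℝ be nonnegative with ∑_{y∈A} δ(y) = 1, let δ(·|·) : A × A → ℝ be conditional transition values, and let λ : A → ℝ be interpolation parameters. Suppose the model is nondegenerate: 0 < λ(y) < 1 for every y ∈ A, and δ(y₂|y₁) ≠ δ(y₂) for every y₁, y₂ ∈ A. Then there exist symbols y₁, y₂ ∈ A such that the nonuniform probability of the two-symbol string y₁y₂ differs from the uniform (context/state) probability: p_n(y₁y₂) ≠ p_u(y₁y₂). -/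
open Finset

/-- Case (ii) of the inequivalence theorem (bigram instance): for a
nondegenerate interpolated bigram model, some two-symbol string gets
different probabilities under the nonuniform and uniform
interpretations. -/
theorem nonuniform_inequivalent_of_nondegenerate
    {A : Type*} [Fintype A] [Nonempty A]
    (δ : A → ℝ) (δc : A → A → ℝ) (lam : A → ℝ)
    (hδ0 : ∀ y, 0 ≤ δ y) (hδ1 : ∑ y, δ y = 1)
    (hlam : ∀ y, 0 < lam y ∧ lam y < 1)
    (hnd : ∀ y1 y2, δc y1 y2 ≠ δ y2) :
    ∃ y1 y2 : A,
      δ y1 * (lam y1 * δc y1 y2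
          + (1 - lam y1) * (lam y1 * δc y1 y2 + (1 - lam y1) * δ y2))
        ≠ δ y1 * (lam y1 * δc y1 y2 + (1 - lam y1) * δ y2) := by
  obtain ⟨y1, hy1⟩ : ∃ y, 0 < δ y := by
    by_contra h
    push_neg at h
    have : ∑ y, δ y = 0 := Finset.sum_eq_zero fun y _ => le_antisymm (h y) (hδ0 y)
    simp [this] at hδ1
  inhabit A
  refine ⟨y1, default, fun h => ?_⟩
  obtain ⟨hl0, hl1⟩ := hlam y1
  have key : δ y1 * ((1 - lam y1) * (lam y1 * (δc y1 default - δ default))) = 0 := by ring_nf; ring_nf at h; linarith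
  have := hnd y1 default
  rcases mul_eq_zero.1 key with h1 | h2
  · linarith
  rcases mul_eq_zero.1 h2 with h3 | h4
  · linarith
  rcases mul_eq_zero.1 h4 with h5 | h6
  · linarith
  · exact this (by linarith)
end

section
/- Let A be a finite nonempty alphabet, let J ≥ 1 be a natural number, let Λ assign to each finite string over A a real number with Λ(y) = 0 for every string y of length J, and let D assign to each string s over A of length < J a function D(s) : A → ℝ with ∑_{a∈A} D(s)(a) = 1. For a nonempty string y = y₁…y_j of length j ≤ J define the prediction probability p̄_v(y) = (1 − Λ(y₁…y_j)) · ∏_{l=1}^{j} D(y₁…y_{l−1})(y_l) · ∏_{l=1}^{j−1} Λ(y₁…y_l). Then ∑_{j=1}^{J} ∑_{y ∈ A^j} p̄_v(y) = 1. -/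
/-!
Write `w(y) = ∏_{l=1}^{j} D(y₁…y_{l−1})(y_l) · ∏_{l=1}^{j−1} Λ(y₁…y_l)` for the weight of
reaching the string `y` of length `j`, so that `p̄_v(y) = w(y) − Λ(y) w(y)`. Extending `y` by one
letter multiplies its weight by `Λ(y) D(y)(a)`, and `D(y)` sums to `1`, so the continuing mass
`∑_{|y| = j} Λ(y) w(y)` equals the total weight `∑_{|y| = j+1} w(y)` of the next length. The sum
over lengths therefore telescopes to `∑_a D(ε)(a) − ∑_{|y| = J} Λ(y) w(y) = 1 − 0`.
-/

open Finset

theorem sum_Icc_sub_telescope {G : Type*} [AddCommGroup G] {P Q : ℕ → G} {m : ℕ} (hm : 1 ≤ m)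
    (h : ∀ j, 1 ≤ j → j < m → Q j = P (j + 1)) :
    ∑ j ∈ Icc 1 m, (P j - Q j) = P 1 - Q m := by
  induction m, hm using Nat.le_induction with
  | base => simp
  | succ n hn ih =>
    rw [sum_Icc_succ_top (by omega), ih fun j hj hjn => h j hj (by omega), h n hn (by omega)]
    abel

theorem Fintype.sum_fun_fin_succ_eq_sum_snoc {A M : Type*} [Fintype A] [AddCommMonoid M]
    (j : ℕ) (g : (Fin (j + 1) → A) → M) :
    ∑ f : Fin (j + 1) → A, g f = ∑ f : Fin j → A, ∑ a, g (Fin.snoc f a) := by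
  rw [← (Fin.snocEquiv fun _ => A).sum_comp, Fintype.sum_prod_type, sum_comm]
  rfl

theorem List.ofFn_snoc {A : Type*} {j : ℕ} (f : Fin j → A) (a : A) :
    List.ofFn (Fin.snoc f a : Fin (j + 1) → A) = List.ofFn f ++ [a] := by
  rw [List.ofFn_succ']
  simp [List.concat_eq_append]

section Prefixes

variable {A M : Type*} [CommMonoid M]

theorem prod_take_get_append_singleton (g : List A → A → M) (y : List A) (a : A) :
    ∏ l : Fin (y ++ [a]).length, g ((y ++ [a]).take l) ((y ++ [a]).get l)
      = (∏ l : Fin y.length, g (y.take l) (y.get l)) * g y a := by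
  rw [← Fin.prod_congr' _ (by simp : y.length + 1 = (y ++ [a]).length), Fin.prod_univ_castSucc]
  simp [List.take_append_of_le_length, List.getElem_append_left]

theorem prod_Icc_take_append_singleton (Λ : List A → M) {y : List A} (hy : y ≠ []) (a : A) :
    ∏ l ∈ Icc 1 ((y ++ [a]).length - 1), Λ ((y ++ [a]).take l)
      = (∏ l ∈ Icc 1 (y.length - 1), Λ (y.take l)) * Λ y := by
  obtain ⟨n, hn⟩ : ∃ n, y.length = n + 1 :=
    Nat.exists_eq_add_one.mpr (List.length_pos_iff.mpr hy)
  have hprefix : ∏ l ∈ Icc 1 ((y ++ [a]).length - 1), Λ ((y ++ [a]).take l)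
      = ∏ l ∈ Icc 1 y.length, Λ (y.take l) := by
    rw [List.length_append, List.length_singleton, Nat.add_sub_cancel]
    exact prod_congr rfl fun l hl => by rw [List.take_append_of_le_length (mem_Icc.1 hl).2]
  rw [hprefix, hn, prod_Icc_succ_top (by omega), Nat.add_sub_cancel, ← hn, List.take_length]

end Prefixes

namespace NonuniformPrediction

variable {A R : Type*} [CommRing R] (Λ : List A → R) (D : List A → A → R)

def pathWeight (y : List A) : R :=
  (∏ l : Fin y.length, D (y.take l) (y.get l)) * ∏ l ∈ Icc 1 (y.length - 1), Λ (y.take l)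

theorem pathWeight_singleton (a : A) : pathWeight Λ D [a] = D [] a := by
  simp [pathWeight]

theorem pathWeight_append_singleton {y : List A} (hy : y ≠ []) (a : A) :
    pathWeight Λ D (y ++ [a]) = Λ y * pathWeight Λ D y * D y a := by
  rw [pathWeight, pathWeight, prod_take_get_append_singleton, prod_Icc_take_append_singleton Λ hy]
  ring

variable [Fintype A]

def levelMass (j : ℕ) : R :=
  ∑ f : Fin j → A, pathWeight Λ D (List.ofFn f)

def continuingMass (j : ℕ) : R :=
  ∑ f : Fin j → A, Λ (List.ofFn f) * pathWeight Λ D (List.ofFn f)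

theorem levelMass_one (hD : ∑ a, D [] a = 1) : levelMass Λ D 1 = 1 := by
  rw [levelMass, Fintype.sum_fun_fin_succ_eq_sum_snoc, Fintype.sum_unique]
  simp only [List.ofFn_snoc, List.ofFn_zero, List.nil_append, pathWeight_singleton]
  exact hD

theorem levelMass_succ {j : ℕ} (hj : 1 ≤ j) (hD : ∀ s : List A, s.length = j → ∑ a, D s a = 1) :
    levelMass Λ D (j + 1) = continuingMass Λ D j := by
  rw [levelMass, continuingMass, Fintype.sum_fun_fin_succ_eq_sum_snoc]
  refine sum_congr rfl fun f _ => ?_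
  have hf : List.ofFn f ≠ [] := by rw [Ne, List.ofFn_eq_nil_iff]; omega
  simp_rw [List.ofFn_snoc, pathWeight_append_singleton Λ D hf, ← mul_sum,
    hD _ (List.length_ofFn), mul_one]

theorem continuingMass_eq_zero {J : ℕ} (hΛ : ∀ y : List A, y.length = J → Λ y = 0) :
    continuingMass Λ D J = 0 :=
  sum_eq_zero fun f _ => by rw [hΛ _ (List.length_ofFn), zero_mul]

end NonuniformPrediction

open NonuniformPrediction

theorem nonuniform_prediction_sums_to_one_general
    {A : Type*} [Fintype A] (J : ℕ) (hJ : 1 ≤ J)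
    (Λ : List A → ℝ) (D : List A → A → ℝ)
    (hΛ : ∀ y : List A, y.length = J → Λ y = 0)
    (hD : ∀ s : List A, s.length < J → ∑ a, D s a = 1) :
    ∑ j ∈ Finset.Icc 1 J, ∑ f : Fin j → A,
        ((1 - Λ (List.ofFn f))
          * ∏ l : Fin (List.ofFn f).length,
              D ((List.ofFn f).take l) ((List.ofFn f).get l))
          * ∏ l ∈ Finset.Icc 1 ((List.ofFn f).length - 1),
              Λ ((List.ofFn f).take l)
      = 1 := by
  calc _ = ∑ j ∈ Icc 1 J, (levelMass Λ D j - continuingMass Λ D j) := by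
        refine sum_congr rfl fun j _ => ?_
        rw [levelMass, continuingMass, ← sum_sub_distrib]
        exact sum_congr rfl fun f _ => by rw [pathWeight]; ring
    _ = levelMass Λ D 1 - continuingMass Λ D J :=
        sum_Icc_sub_telescope hJ fun j hj hjJ =>
          (levelMass_succ Λ D hj fun s hs => hD s (by omega)).symm
    _ = 1 := by
        rw [levelMass_one Λ D (hD [] hJ), continuingMass_eq_zero Λ D hΛ, sub_zero]

/-- The nonuniform prediction probabilities form a probability
distribution over all predictions of length between `1` and `J`:
`p̄_v(y₁…y_j) = (1 − Λ(y₁…y_j)) · ∏_{l=1}^{j} D(y₁…y_{l−1})(y_l)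
· ∏_{l=1}^{j−1} Λ(y₁…y_l)` sums to `1` over all nonempty strings of
length at most `J`, provided `Λ` vanishes on strings of length `J` and
each `D(s)` is a probability distribution on the alphabet. -/
theorem nonuniform_prediction_sums_to_one
    {A : Type*} [Fintype A] [Nonempty A] (J : ℕ) (hJ : 1 ≤ J)
    (Λ : List A → ℝ) (D : List A → A → ℝ)
    (hΛ : ∀ y : List A, y.length = J → Λ y = 0)
    (hD : ∀ s : List A, s.length < J → ∑ a, D s a = 1) :
    ∑ j ∈ Finset.Icc 1 J, ∑ f : Fin j → A,
        ((1 - Λ (List.ofFn f))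
          * ∏ l : Fin (List.ofFn f).length,
              D ((List.ofFn f).take l) ((List.ofFn f).get l))
          * ∏ l ∈ Finset.Icc 1 ((List.ofFn f).length - 1),
              Λ ((List.ofFn f).take l)
      = 1 :=
  nonuniform_prediction_sums_to_one_general J hJ Λ D hΛ hD
end
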